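/- Let M = (E, 𝓘) be a matroid, let m ≥ 1, Δ ≥ 1, μ ≥ 0 be integers, let W : E → ℤ^m satisfy ‖W(e)‖_∞ ≤ Δ for all e ∈ E, let A, B ∈ 𝓘 be disjoint independent sets with |A| = |B| = k and ‖W(A) − W(B)‖₁ ≤ μ, and let d ∈ ℤ^m. Then there exist unicolor subsets A' ⊆ A and B' ⊆ B of equal cardinality such that: (i) (A \ A') ∪ B' ∈ 𝓘; (ii) |A'| = |B'| ≥ (k − ‖d‖₁·μ) / ((2‖d‖₁Δ + 1)² · (2Δ+1)^{2m}); and (iii) dᵀW(a) ≥ dᵀW(b) for every a ∈ A' and b ∈ B'. -/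

import Mathlib

/-!
Project the weights onto `d`: the values `v e = dᵀW(e)` lie in `[-‖d‖₁Δ, ‖d‖₁Δ]`, and
`∑_A v - ∑_B v ≥ -‖d‖₁μ`. Averaging over the `2‖d‖₁Δ + 1` thresholds `t` in that range gives one
at which `B` has at least `(k - ‖d‖₁μ) / (2‖d‖₁Δ + 1)` more elements with `v ≤ t` than `A` has
with `v < t`. Augmenting `{a ∈ A | v a < t}` from `{b ∈ B | v b ≤ t}` produces that many elements
of `B` which can be added to it, and augmenting further from `A` shows that they can replace equally
many elements of `A` with `v ≥ t`. Passing to a unicolor part of the new `B`-elements, and then of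
the removed `A`-elements (exchanging back by one more augmentation), each costs a factor of at most
`(2Δ + 1)^m`, the number of possible weight vectors.
-/

/-- A matroid on a finite ground set `E`, given by its family of independent sets. -/
structure FinMatroid (E : Type*) [DecidableEq E] where
  Indep : Finset E → Prop
  empty_indep : Indep ∅
  subset_indep : ∀ ⦃X Y : Finset E⦄, X ⊆ Y → Indep Y → Indep X
  exchange : ∀ ⦃X Y : Finset E⦄, Indep X → Indep Y → X.card < Y.card →
    ∃ e ∈ Y \ X, Indep (insert e X)

/-- A set is unicolor (w.r.t. a multidimensional weight `W`) if all its elements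
have the same weight vector. -/
def Unicolor {E : Type*} {m : ℕ} (W : E → Fin m → ℤ) (S : Finset E) : Prop :=
  ∀ x ∈ S, ∀ y ∈ S, W x = W y

open Finset Matrix

theorem card_filter_Icc_le (T x : ℤ) (hx : |x| ≤ T) :
    (#{t ∈ Icc (-T) T | x ≤ t} : ℤ) = T + 1 - x := by
  rw [abs_le] at hx
  have : {t ∈ Icc (-T) T | x ≤ t} = Icc x T := by ext; simp; omega
  rw [this]; exact Int.card_Icc_of_le _ _ (by omega)

theorem card_filter_Icc_lt (T x : ℤ) (hx : |x| ≤ T) :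
    (#{t ∈ Icc (-T) T | x < t} : ℤ) = T - x := by
  rw [abs_le] at hx
  have : {t ∈ Icc (-T) T | x < t} = Ioc x T := by ext; simp; omega
  rw [this]; exact Int.card_Ioc_of_le _ _ (by omega)

theorem exists_threshold {ι : Type*} (A B : Finset ι) (v : ι → ℤ) (T : ℤ) (hT : 0 ≤ T)
    (hA : ∀ a ∈ A, |v a| ≤ T) (hB : ∀ b ∈ B, |v b| ≤ T) (hAB : #A = #B) :
    ∃ t, #A + (∑ a ∈ A, v a - ∑ b ∈ B, v b) ≤
      (2 * T + 1) * ((#{b ∈ B | v b ≤ t} : ℤ) - #{a ∈ A | v a < t}) := by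
  have hB_count : ∑ t ∈ Icc (-T) T, (#{b ∈ B | v b ≤ t} : ℤ) = ∑ b ∈ B, (T + 1 - v b) := by
    have := sum_card_bipartiteAbove_eq_sum_card_bipartiteBelow (s := Icc (-T) T) (t := B)
      (r := fun t b => v b ≤ t)
    rw [← sum_congr rfl fun b hb => card_filter_Icc_le T (v b) (hB b hb)]
    exact_mod_cast this
  have hA_count : ∑ t ∈ Icc (-T) T, (#{a ∈ A | v a < t} : ℤ) = ∑ a ∈ A, (T - v a) := by
    have := sum_card_bipartiteAbove_eq_sum_card_bipartiteBelow (s := Icc (-T) T) (t := A)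
      (r := fun t a => v a < t)
    rw [← sum_congr rfl fun a ha => card_filter_Icc_lt T (v a) (hA a ha)]
    exact_mod_cast this
  obtain ⟨t, -, ht⟩ := exists_le_of_sum_le (s := Icc (-T) T) (nonempty_Icc.2 (by omega))
    (f := fun _ => #A + (∑ a ∈ A, v a - ∑ b ∈ B, v b))
    (g := fun t => (2 * T + 1) * ((#{b ∈ B | v b ≤ t} : ℤ) - #{a ∈ A | v a < t})) (by
      rw [← mul_sum, sum_sub_distrib, hB_count, hA_count, sum_const, nsmul_eq_mul, Int.card_Icc,
        Int.toNat_of_nonneg (by omega)]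
      simp only [sum_sub_distrib, sum_add_distrib, sum_const, hAB, nsmul_eq_mul]
      exact le_of_eq (by ring))
  exact ⟨t, ht⟩

theorem abs_sum_mul_le {ι R : Type*} [CommRing R] [LinearOrder R] [IsStrictOrderedRing R]
    (s : Finset ι) (d x : ι → R) {c : R} (hx : ∀ i ∈ s, |x i| ≤ c) :
    |∑ i ∈ s, d i * x i| ≤ (∑ i ∈ s, |d i|) * c :=
  calc |∑ i ∈ s, d i * x i| ≤ ∑ i ∈ s, |d i| * |x i| := by
        simpa only [abs_mul] using abs_sum_le_sum_abs (fun i => d i * x i) s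
    _ ≤ ∑ i ∈ s, |d i| * c :=
        sum_le_sum fun i hi => mul_le_mul_of_nonneg_left (hx i hi) (abs_nonneg _)
    _ = (∑ i ∈ s, |d i|) * c := (sum_mul ..).symm

section Unicolor

variable {E : Type*} {m : ℕ} {W : E → Fin m → ℤ}

theorem Unicolor.subset {S T : Finset E} (hS : Unicolor W S) (hT : T ⊆ S) : Unicolor W T :=
  fun x hx y hy => hS x (hT hx) y (hT hy)

theorem unicolor_empty : Unicolor W ∅ := by simp [Unicolor]

theorem card_image_le_of_abs_le {Δ : ℕ} (hW : ∀ e i, |W e i| ≤ Δ) (S : Finset E) :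
    #(S.image W) ≤ (2 * Δ + 1) ^ m := by
  calc #(S.image W) ≤ #(Fintype.piFinset fun _ : Fin m => Icc (-(Δ : ℤ)) Δ) := by
        refine card_le_card fun c hc => ?_
        obtain ⟨e, -, rfl⟩ := mem_image.1 hc
        simpa only [Fintype.mem_piFinset, mem_Icc, ← abs_le] using hW e
    _ = (2 * Δ + 1) ^ m := by
        simp only [Fintype.card_piFinset, Int.card_Icc, prod_const, card_univ, Fintype.card_fin]
        congr 1
        omega

theorem exists_unicolor_subset {Δ : ℕ} (hW : ∀ e i, |W e i| ≤ Δ) (S : Finset E) :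
    ∃ T ⊆ S, Unicolor W T ∧ #S ≤ (2 * Δ + 1) ^ m * #T := by
  rcases S.eq_empty_or_nonempty with rfl | hS
  · exact ⟨∅, subset_rfl, unicolor_empty, by simp⟩
  obtain ⟨c, -, hc⟩ := (S.image W).exists_max_image (fun c => #{e ∈ S | W e = c}) (hS.image W)
  refine ⟨{e ∈ S | W e = c}, filter_subset _ _,
    fun x hx y hy => (mem_filter.1 hx).2.trans (mem_filter.1 hy).2.symm, ?_⟩
  calc #S ≤ #{e ∈ S | W e = c} * #(S.image W) := card_le_mul_card_image S _ hc
    _ ≤ (2 * Δ + 1) ^ m * #{e ∈ S | W e = c} := by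
        rw [mul_comm]; exact Nat.mul_le_mul_right _ (card_image_le_of_abs_le hW S)

end Unicolor

namespace FinMatroid

variable {E : Type*} [DecidableEq E] (M : FinMatroid E)

theorem exists_subset_indep_union {X Y : Finset E} (hX : M.Indep X) (hY : M.Indep Y)
    (hXY : #X ≤ #Y) : ∃ Y' ⊆ Y \ X, M.Indep (X ∪ Y') ∧ #X + #Y' = #Y := by
  obtain ⟨n, hn⟩ := Nat.exists_eq_add_of_le hXY
  induction n generalizing X with
  | zero => exact ⟨∅, empty_subset _, by simpa using hX, by simp [hn]⟩
  | succ n ih =>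
    obtain ⟨e, he, heX⟩ := M.exchange hX hY (by omega)
    have heX' : e ∉ X := (mem_sdiff.1 he).2
    obtain ⟨Y', hY', hI, hcard⟩ :=
      ih heX (by rw [card_insert_of_notMem heX']; omega) (by rw [card_insert_of_notMem heX']; omega)
    have heY' : e ∉ Y' := fun h => (mem_sdiff.1 (hY' h)).2 (mem_insert_self e X)
    refine ⟨insert e Y', insert_subset he (hY'.trans (sdiff_subset_sdiff subset_rfl
      (subset_insert e X))), by rwa [union_insert, ← insert_union], ?_⟩
    rw [card_insert_of_notMem heY', ← hcard, card_insert_of_notMem heX']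
    omega

theorem exists_indep_sdiff_union_of_indep_union {A S C : Finset E} (hA : M.Indep A)
    (hSC : M.Indep (S ∪ C)) (hS : S ⊆ A) (hAC : Disjoint A C) (hcard : #S + #C ≤ #A) :
    ∃ A₁ ⊆ A \ S, #A₁ = #C ∧ M.Indep ((A \ A₁) ∪ C) := by
  have hSC_card : #(S ∪ C) = #S + #C := card_union_of_disjoint (hAC.mono_left hS)
  obtain ⟨A₂, hA₂, hI, hcard₂⟩ := M.exists_subset_indep_union hSC hA (by omega)
  have hSA₂ : S ∪ A₂ ⊆ A := union_subset hS (hA₂.trans sdiff_subset)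
  have hSA₂_card : #(S ∪ A₂) = #S + #A₂ :=
    card_union_of_disjoint <|
      disjoint_of_subset_right hA₂ (disjoint_sdiff.mono_left subset_union_left)
  refine ⟨A \ (S ∪ A₂), sdiff_subset_sdiff subset_rfl subset_union_left, ?_, ?_⟩
  · rw [card_sdiff_of_subset hSA₂]
    omega
  · rwa [Finset.sdiff_sdiff_eq_self hSA₂, union_right_comm]

theorem exists_indep_sdiff_union_of_subset {A A₁ A' C : Finset E} (hA : M.Indep A)
    (hI : M.Indep ((A \ A₁) ∪ C)) (hA₁ : A₁ ⊆ A) (hAC : Disjoint A C) (hcard : #A₁ ≤ #C)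
    (hA' : A' ⊆ A₁) : ∃ C' ⊆ C, #C' = #A' ∧ M.Indep ((A \ A') ∪ C') := by
  have hX : M.Indep (A \ A') := M.subset_indep sdiff_subset hA
  have hY_card : #(A \ A₁ ∪ C) = #A - #A₁ + #C := by
    rw [card_union_of_disjoint (hAC.mono_left sdiff_subset), card_sdiff_of_subset hA₁]
  have hX_card : #(A \ A') = #A - #A' := card_sdiff_of_subset (hA'.trans hA₁)
  have hA'_le : #A' ≤ #A₁ := card_le_card hA'
  have hA₁_le : #A₁ ≤ #A := card_le_card hA₁
  obtain ⟨Y', hY', hI', hcard'⟩ := M.exists_subset_indep_union hX hI (by omega)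
  obtain ⟨C', hC'Y', hC'⟩ := exists_subset_card_eq (s := Y') (n := #A') (by omega)
  refine ⟨C', fun x hx => ?_, hC', M.subset_indep (union_subset_union subset_rfl hC'Y') hI'⟩
  obtain ⟨hxAC, hxA'⟩ := mem_sdiff.1 (hY' (hC'Y' hx))
  rcases mem_union.1 hxAC with hxA | hxC
  · exact absurd (mem_sdiff.2 ⟨(mem_sdiff.1 hxA).1, fun h => (mem_sdiff.1 hxA).2 (hA' h)⟩) hxA'
  · exact hxC

theorem exists_unicolor_exchange {m Δ : ℕ} {W : E → Fin m → ℤ} (hW : ∀ e i, |W e i| ≤ Δ)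
    {A B Aₗ Bₗ : Finset E} (hA : M.Indep A) (hB : M.Indep B) (hAB : Disjoint A B)
    (hBA : #B ≤ #A) (hAₗ : Aₗ ⊆ A) (hBₗ : Bₗ ⊆ B) :
    ∃ A' ⊆ A \ Aₗ, ∃ B' ⊆ Bₗ, Unicolor W A' ∧ Unicolor W B' ∧ M.Indep ((A \ A') ∪ B') ∧
      #A' = #B' ∧ #Bₗ ≤ #Aₗ + ((2 * Δ + 1) ^ m) ^ 2 * #A' := by
  rcases lt_or_ge #Bₗ #Aₗ with hlt | hle
  · exact ⟨∅, empty_subset _, ∅, empty_subset _, unicolor_empty, unicolor_empty,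
      by simpa using hA, rfl, by omega⟩
  obtain ⟨B₁, hB₁, hI₁, hB₁_card⟩ :=
    M.exists_subset_indep_union (M.subset_indep hAₗ hA) (M.subset_indep hBₗ hB) hle
  obtain ⟨B₂, hB₂, hB₂_uni, hB₂_card⟩ := exists_unicolor_subset hW B₁
  have hB₂B : B₂ ⊆ B := hB₂.trans (hB₁.trans (sdiff_subset.trans hBₗ))
  have hBₗ_card : #Bₗ ≤ #B := card_le_card hBₗ
  have hB₂_le : #B₂ ≤ #B₁ := card_le_card hB₂
  obtain ⟨A₁, hA₁, hA₁_card, hI₂⟩ := M.exists_indep_sdiff_union_of_indep_union hA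
    (M.subset_indep (union_subset_union subset_rfl hB₂) hI₁) hAₗ (hAB.mono_right hB₂B) (by omega)
  obtain ⟨A', hA', hA'_uni, hA'_card⟩ := exists_unicolor_subset hW A₁
  obtain ⟨B', hB', hB'_card, hI₃⟩ := M.exists_indep_sdiff_union_of_subset hA hI₂
    (hA₁.trans sdiff_subset) (hAB.mono_right hB₂B) hA₁_card.le hA'
  refine ⟨A', hA'.trans hA₁, B', hB'.trans (hB₂.trans (hB₁.trans sdiff_subset)), hA'_uni,
    hB₂_uni.subset hB', hI₃, hB'_card.symm, ?_⟩
  calc #Bₗ = #Aₗ + #B₁ := hB₁_card.symm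
    _ ≤ #Aₗ + (2 * Δ + 1) ^ m * #A₁ := by rw [hA₁_card]; omega
    _ ≤ #Aₗ + (2 * Δ + 1) ^ m * ((2 * Δ + 1) ^ m * #A') := by gcongr
    _ = #Aₗ + ((2 * Δ + 1) ^ m) ^ 2 * #A' := by ring

end FinMatroid

theorem div_le_of_le_mul_of_one_le {x N Q a : ℝ} (h : x ≤ N * Q * a) (hN : 1 ≤ N) (hQ : 0 < Q)
    (ha : 0 ≤ a) : x / (N ^ 2 * Q) ≤ a := by
  rw [div_le_iff₀ (by positivity)]
  nlinarith [mul_nonneg (mul_nonneg (sub_nonneg.2 hN) hQ.le) ha]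

theorem monotone_exchange_multidim_general {E : Type*} [DecidableEq E]
    (M : FinMatroid E) (m Δ μ : ℕ)
    (W : E → Fin m → ℤ) (hW : ∀ e i, |W e i| ≤ (Δ : ℤ))
    (A B : Finset E) (hA : M.Indep A) (hB : M.Indep B) (hAB : Disjoint A B)
    (k : ℕ) (hAk : A.card = k) (hBk : B.card = k)
    (hμ : ∑ i, |(∑ e ∈ A, W e) i - (∑ e ∈ B, W e) i| ≤ (μ : ℤ))
    (d : Fin m → ℤ) :
    ∃ A' ⊆ A, ∃ B' ⊆ B,
      Unicolor W A' ∧ Unicolor W B' ∧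
      M.Indep ((A \ A') ∪ B') ∧
      A'.card = B'.card ∧
      ((k : ℝ) - ((∑ i, |d i| : ℤ) : ℝ) * (μ : ℝ)) /
          ((2 * ((∑ i, |d i| : ℤ) : ℝ) * (Δ : ℝ) + 1) ^ 2 * (2 * (Δ : ℝ) + 1) ^ (2 * m))
        ≤ (A'.card : ℝ) ∧
      (∀ a ∈ A', ∀ b ∈ B', ∑ i, d i * W b i ≤ ∑ i, d i * W a i) := by
  set D : ℤ := ∑ i, |d i|
  set v : E → ℤ := fun e => d ⬝ᵥ W e
  have hv : ∀ e, |v e| ≤ D * Δ := fun e => abs_sum_mul_le _ _ _ fun i _ => hW e i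
  have hv_sum : -(D * μ) ≤ ∑ a ∈ A, v a - ∑ b ∈ B, v b := by
    rw [← dotProduct_sum, ← dotProduct_sum, ← dotProduct_sub]
    exact neg_le_of_abs_le (abs_sum_mul_le _ _ _ fun i _ =>
      (single_le_sum (fun j _ => abs_nonneg _) (mem_univ i)).trans hμ)
  obtain ⟨t, ht⟩ := exists_threshold A B v (D * Δ) (by positivity) (fun a _ => hv a)
    (fun b _ => hv b) (hAk.trans hBk.symm)
  obtain ⟨A', hA', B', hB', hA'_uni, hB'_uni, hI, hcard, hbound⟩ :=
    M.exists_unicolor_exchange hW hA hB hAB (hBk.trans hAk.symm).le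
      (filter_subset (v · < t) A) (filter_subset (v · ≤ t) B)
  refine ⟨A', hA'.trans sdiff_subset, B', hB'.trans (filter_subset _ _), hA'_uni, hB'_uni, hI,
    hcard, ?_, fun a ha b hb => ?_⟩
  · have hbound' : (#{b ∈ B | v b ≤ t} : ℤ) ≤ #{a ∈ A | v a < t} + ((2 * Δ + 1) ^ m) ^ 2 * #A' := by
      exact_mod_cast hbound
    have hk : (k : ℤ) - D * μ ≤ (2 * D * Δ + 1) * ((2 * Δ + 1) ^ m) ^ 2 * #A' := by
      rw [← hAk]
      linarith [mul_le_mul_of_nonneg_left hbound' (by positivity : (0 : ℤ) ≤ 2 * (D * Δ) + 1)]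
    rw [pow_mul']
    exact div_le_of_le_mul_of_one_le (by exact_mod_cast hk)
      (le_add_of_nonneg_left (by positivity)) (by positivity) (by positivity)
  · have ha' := mem_sdiff.1 (hA' ha)
    exact (mem_filter.1 (hB' hb)).2.trans (not_lt.1 fun h => ha'.2 (mem_filter.2 ⟨ha'.1, h⟩))

/-- Multidimensional monotone exchange lemma: for disjoint equicardinal independent sets
`A, B` with `‖W(A) − W(B)‖₁ ≤ μ` and any `d ∈ ℤ^m`, there are unicolor subsets `A' ⊆ A`,
`B' ⊆ B` of equal cardinality at least `(k − ‖d‖₁μ)/((2‖d‖₁Δ+1)²(2Δ+1)^{2m})` such that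
`(A \ A') ∪ B'` is independent and `dᵀW(a) ≥ dᵀW(b)` for `a ∈ A'`, `b ∈ B'`. -/
theorem monotone_exchange_multidim {E : Type*} [DecidableEq E] [Fintype E]
    (M : FinMatroid E) (m Δ μ : ℕ) (hm : 1 ≤ m) (hΔ : 1 ≤ Δ)
    (W : E → Fin m → ℤ) (hW : ∀ e i, |W e i| ≤ (Δ : ℤ))
    (A B : Finset E) (hA : M.Indep A) (hB : M.Indep B) (hAB : Disjoint A B)
    (k : ℕ) (hAk : A.card = k) (hBk : B.card = k)
    (hμ : ∑ i, |(∑ e ∈ A, W e) i - (∑ e ∈ B, W e) i| ≤ (μ : ℤ))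
    (d : Fin m → ℤ) :
    ∃ A' ⊆ A, ∃ B' ⊆ B,
      Unicolor W A' ∧ Unicolor W B' ∧
      M.Indep ((A \ A') ∪ B') ∧
      A'.card = B'.card ∧
      ((k : ℝ) - ((∑ i, |d i| : ℤ) : ℝ) * (μ : ℝ)) /
          ((2 * ((∑ i, |d i| : ℤ) : ℝ) * (Δ : ℝ) + 1) ^ 2 * (2 * (Δ : ℝ) + 1) ^ (2 * m))
        ≤ (A'.card : ℝ) ∧
      (∀ a ∈ A', ∀ b ∈ B', ∑ i, d i * W b i ≤ ∑ i, d i * W a i) :=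
  monotone_exchange_multidim_general M m Δ μ W hW A B hA hB hAB k hAk hBk hμ d
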